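/- Let P be a locally stratified constraint logic program. For every ground atom A, there exists a proof tree for A and P if and only if A ∈ M(P). -/

import Mathlib

namespace CLP

/-! ### The set `W` of countable ordinals -/

/-- `W` : the set of countable ordinals. -/
abbrev W : Type 1 := {o : Ordinal.{0} // o < (Cardinal.aleph 1).ord}

theorem natW_lt (n : ℕ) : (n : Ordinal.{0}) < (Cardinal.aleph 1).ord := by
  refine Cardinal.lt_ord.mpr ?_
  simpa using (Cardinal.nat_lt_aleph0 n).trans Cardinal.aleph0_lt_aleph_one

/-- natural numbers as countable ordinals -/
def natW (n : ℕ) : W := ⟨n, natW_lt n⟩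

/-- the zero ordinal as an element of `W` -/
def zeroW : W := natW 0

theorem succW_lt {o : Ordinal.{0}} (h : o < (Cardinal.aleph 1).ord) :
    o + 1 < (Cardinal.aleph 1).ord := by
  exact Order.IsSuccLimit.add_one_lt (Cardinal.isSuccLimit_ord (Cardinal.aleph0_le_aleph 1)) h

/-- the successor operation on countable ordinals (`σ(A) + 1`) -/
def succW (o : W) : W := ⟨o.1 + 1, succW_lt o.2⟩

/-! ### Syntax and semantics of constraint logic programs

Atoms, constraints, and clauses are represented semantically: an atom with variables
in `V` is a user-defined predicate symbol (from `Pu`) together with the function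
mapping each valuation `v : V → D` to the tuple of values of its argument terms, and a
constraint is represented by its satisfaction predicate on valuations (the
interpretation `𝒟` for the constraints, with carrier `D`, is thereby fixed). -/

/-- An atom: a user-defined predicate symbol together with its (semantically
represented) tuple of argument terms. -/
structure SAtm (V D Pu : Type) where
  pred : Pu
  args : (V → D) → List D

/-- Ground atoms: the base `B_𝒟` is `{p(d₁,…,dₙ) | p ∈ Pred_u, dᵢ ∈ D}`. -/
abbrev GrAtm (Pu D : Type) := Pu × List D

variable {V D Pu : Type}

/-- the ground atom `v(A)` obtained by applying the valuation `v` to the atom `A` -/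
def SAtm.eval (A : SAtm V D Pu) (v : V → D) : GrAtm Pu D := (A.pred, A.args v)

/-- A clause `H ← c ∧ L₁ ∧ … ∧ Lₘ`: a head atom `H`, a constraint `c`, and a body,
i.e. a list of literals; a literal is a pair of a sign (`true` = positive literal `A`,
`false` = negative literal `¬A`) and an atom. -/
structure SClause (V D Pu : Type) where
  head : SAtm V D Pu
  constr : (V → D) → Prop
  body : List (Bool × SAtm V D Pu)

/-- A constraint logic program: a set of clauses (finiteness is stated separately). -/
abbrev SProg (V D Pu : Type) := Set (SClause V D Pu)

/-- truth of a ground literal in a `D`-interpretation `I` -/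
def litTrue (I : Set (GrAtm Pu D)) (l : Bool × GrAtm Pu D) : Prop :=
  if l.1 then l.2 ∈ I else l.2 ∉ I

/-- truth of the ground instance `v(γ)` of the clause `γ` in the `D`-interpretation `I` -/
def SClause.groundTrue (γ : SClause V D Pu) (I : Set (GrAtm Pu D)) (v : V → D) : Prop :=
  γ.constr v → (∀ l ∈ γ.body, litTrue I (l.1, l.2.eval v)) → γ.head.eval v ∈ I

/-- `I` is a `D`-model of the program `P` -/
def isModel (I : Set (GrAtm Pu D)) (P : SProg V D Pu) : Prop :=
  ∀ γ ∈ P, ∀ v, γ.groundTrue I v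

/-- the ground instance `v(γ)` of the clause `γ` is locally stratified w.r.t. `σ` -/
def SClause.locStrat (σ : GrAtm Pu D → W) (γ : SClause V D Pu) (v : V → D) : Prop :=
  γ.constr v → ∀ l ∈ γ.body,
    (l.1 = true → σ (l.2.eval v) ≤ σ (γ.head.eval v)) ∧
    (l.1 = false → σ (l.2.eval v) < σ (γ.head.eval v))

/-- `P` is locally stratified w.r.t. the local stratification `σ : B_𝒟 → W` -/
def locStratWrt (σ : GrAtm Pu D → W) (P : SProg V D Pu) : Prop :=
  ∀ γ ∈ P, ∀ v, γ.locStrat σ v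

/-- `P` is locally stratified -/
def LocallyStratified (P : SProg V D Pu) : Prop := ∃ σ, locStratWrt σ P

/-- `I ≺ J` : `I` is preferable to `J` w.r.t. the local stratification `σ` -/
def pref (σ : GrAtm Pu D → W) (I J : Set (GrAtm Pu D)) : Prop :=
  ∀ A₁ ∈ I \ J, ∃ A₂ ∈ J \ I, σ A₂ < σ A₁

/-- `M` is a perfect model of `P` w.r.t. the local stratification `σ`:
a `D`-model preferable to every other `D`-model of `P` -/
def PerfectModelWrt (σ : GrAtm Pu D → W) (P : SProg V D Pu) (M : Set (GrAtm Pu D)) : Prop :=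
  isModel M P ∧ ∀ N, isModel N P → N ≠ M → pref σ M N

/-- `M` is a perfect model of `P` (w.r.t. some local stratification for `P`) -/
def IsPerfectModel (P : SProg V D Pu) (M : Set (GrAtm Pu D)) : Prop :=
  ∃ σ, locStratWrt σ P ∧ PerfectModelWrt σ P M

/-! ### Predicate dependencies -/

/-- the predicate `p` immediately depends on the predicate `q` in `P` -/
def immDep (P : SProg V D Pu) (p q : Pu) : Prop :=
  ∃ γ ∈ P, γ.head.pred = p ∧ ∃ l ∈ γ.body, (l.2).pred = q

/-- the predicate `p` depends on the predicate `q` in `P` -/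
def dependsOn (P : SProg V D Pu) : Pu → Pu → Prop := Relation.TransGen (immDep P)

/-- `Def(p, P)` : the definition of the predicate `p` in `P` -/
def DefOf (p : Pu) (P : SProg V D Pu) : SProg V D Pu := {γ ∈ P | γ.head.pred = p}

/-! ### Proof trees -/

/-- Finite trees whose internal nodes are ground atoms; the children of a node are
either subtrees (corresponding to positive literals) or leaves labelled by a ground
atom `B` (corresponding to negative literals `¬B`). A node with the empty list of
children is a node whose unique child is the empty conjunction `true`. -/
inductive PT (Pu D : Type) : Type where
  | node (A : GrAtm Pu D) (children : List (PT Pu D ⊕ GrAtm Pu D)) : PT Pu D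

/-- the ground atom at the root of a tree -/
def PT.root : PT Pu D → GrAtm Pu D
  | .node A _ => A

/-- the ground literal corresponding to a child of a node of a tree -/
def childLit : PT Pu D ⊕ GrAtm Pu D → Bool × GrAtm Pu D
  | .inl t => (true, t.root)
  | .inr B => (false, B)

/-- Validity of a tree w.r.t. a program `P` and an "oracle" `O` for the negative
leaves: each node `A` with children `L₁,…,Lᵣ` must be obtained from a ground instance
`A ← c ∧ L₁ ∧ … ∧ Lᵣ` (with `𝒟 ⊨ c`) of a clause of `P`, and every negative leaf
`¬B` must satisfy `O B`. -/
inductive PT.ValidW (P : SProg V D Pu) (O : GrAtm Pu D → Prop) : PT Pu D → Prop where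
  | node {A : GrAtm Pu D} {cs : List (PT Pu D ⊕ GrAtm Pu D)}
      (hc : ∃ γ ∈ P, ∃ v, γ.constr v ∧ γ.head.eval v = A ∧
        γ.body.map (fun l => (l.1, l.2.eval v)) = cs.map childLit)
      (hpos : ∀ t, Sum.inl t ∈ cs → PT.ValidW P O t)
      (hneg : ∀ B, Sum.inr B ∈ cs → O B) :
      PT.ValidW P O (.node A cs)

/-- `HasPTAux σ P α A` holds iff there is a proof tree for `A` and `P`, where a
negative leaf `¬B` is allowed only if there is no proof tree for `B` and `P` among
the proof trees for ground atoms of stratum `< α`. -/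
def HasPTAux (σ : GrAtm Pu D → W) (P : SProg V D Pu) (α : W) (A : GrAtm Pu D) : Prop :=
  ∃ T : PT Pu D, T.root = A ∧
    PT.ValidW P (fun B => ∀ _hlt : σ B < α, ¬ HasPTAux σ P (σ B) B) T
termination_by α.1
decreasing_by exact _hlt

/-- there exists a proof tree for the ground atom `A` and the program `P` -/
def HasProofTree (σ : GrAtm Pu D → W) (P : SProg V D Pu) (A : GrAtm Pu D) : Prop :=
  HasPTAux σ P (σ A) A

/-- `T` is a proof tree for the ground atom `A` and the program `P` -/
def IsProofTree (σ : GrAtm Pu D → W) (P : SProg V D Pu) (A : GrAtm Pu D) (T : PT Pu D) : Prop :=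
  T.root = A ∧
    PT.ValidW P (fun B => ∀ _hlt : σ B < σ A, ¬ HasPTAux σ P (σ B) B) T

/-! ### The measure `μ` -/

mutual
  /-- `size(T)` : the number of atoms occurring at non-leaf nodes of `T` -/
  inductive PT.HasSize : PT Pu D → ℕ → Prop where
    | node {A cs n} : ChildrenSize cs n → PT.HasSize (.node A cs) (1 + n)
  /-- total size of the subtrees among a list of children -/
  inductive ChildrenSize : List (PT Pu D ⊕ GrAtm Pu D) → ℕ → Prop where
    | nil : ChildrenSize [] 0
    | inl {t cs n m} : PT.HasSize t n → ChildrenSize cs m →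
        ChildrenSize (Sum.inl t :: cs) (n + m)
    | inr {B cs m} : ChildrenSize cs m → ChildrenSize (Sum.inr B :: cs) m
end

/-- the (non-strict) lexicographic ordering `≤_lex` on `W × ℕ` -/
def wnLE (a b : W × ℕ) : Prop := a.1 < b.1 ∨ (a.1 = b.1 ∧ a.2 ≤ b.2)

/-- the strict lexicographic ordering `<_lex` on `W × ℕ` -/
def wnLT (a b : W × ℕ) : Prop := a.1 < b.1 ∨ (a.1 = b.1 ∧ a.2 < b.2)

/-- `⟨α₁,m₁⟩ ⊕ ⟨α₂,m₂⟩ = ⟨max(α₁,α₂), m₁+m₂⟩` -/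
noncomputable def oplus (a b : W × ℕ) : W × ℕ := (max a.1 b.1, a.2 + b.2)

/-- `μ(A,P) = min_lex {⟨σ(A), size(T)⟩ | T is a proof tree for A and P}`:
`muAtomIs σ P A m` states that `μ(A,P)` is defined and equal to `m`. -/
def muAtomIs (σ : GrAtm Pu D → W) (P : SProg V D Pu) (A : GrAtm Pu D) (m : W × ℕ) : Prop :=
  (∃ (T : PT Pu D) (sz : ℕ), IsProofTree σ P A T ∧ T.HasSize sz ∧ m = (σ A, sz)) ∧
  (∀ (T : PT Pu D) (sz : ℕ), IsProofTree σ P A T → T.HasSize sz → wnLE m (σ A, sz))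

/-- `μ` on ground literals: `μ(A,P)` for an atom, `⟨σ(A),0⟩` for a negated atom `¬A` -/
def muLitIs (σ : GrAtm Pu D → W) (P : SProg V D Pu) :
    Bool × GrAtm Pu D → W × ℕ → Prop
  | (true, A), m => muAtomIs σ P A m
  | (false, A), m => m = (σ A, 0)

/-- `μ(L₁ ∧ … ∧ Lₙ, P) = μ(L₁,P) ⊕ … ⊕ μ(Lₙ,P)` -/
inductive muGoalIs (σ : GrAtm Pu D → W) (P : SProg V D Pu) :
    List (Bool × GrAtm Pu D) → W × ℕ → Prop where
  | nil : muGoalIs σ P [] (zeroW, 0)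
  | cons {l G m mg} : muLitIs σ P l m → muGoalIs σ P G mg →
      muGoalIs σ P (l :: G) (oplus m mg)

end CLP

/-!
Let `S` be the set of atoms having a proof tree. Since local stratification puts every leaf of
a proof tree for `A` strictly below `σ(A)`, the condition "no proof tree for `B` below `σ(A)`"
on a negative leaf `¬B` is just `B ∉ S`. Hence `S` is a model of `P`: a true body instance is
assembled from proof trees and such leaves. It is also preferable to every model `N` for every
local stratification `τ`: descending from an atom of `S \ N` along children that are false in
`N` must end at a negative leaf `¬B` with `B ∈ N \ S`, and `τ` does not increase along the way
and drops at that leaf. As the strata are well-founded, `≺` is antisymmetric, so the perfect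
model is `S`.
-/

namespace CLP

variable {V D Pu : Type}

def provableAtoms (σ : GrAtm Pu D → W) (P : SProg V D Pu) : Set (GrAtm Pu D) :=
  {A | HasProofTree σ P A}

theorem PT.ValidW.mono {P : SProg V D Pu} {O O' : GrAtm Pu D → Prop} (h : ∀ B, O B → O' B)
    {T : PT Pu D} (hT : PT.ValidW P O T) : PT.ValidW P O' T := by
  induction hT with
  | node hc _ hneg ih => exact .node hc ih fun B hB => h B (hneg B hB)

section GroundInstance

variable {P : SProg V D Pu} {γ : SClause V D Pu} {v : V → D} {cs : List (PT Pu D ⊕ GrAtm Pu D)}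

theorem exists_mem_body_of_mem_children
    (hmap : γ.body.map (fun l => (l.1, l.2.eval v)) = cs.map childLit)
    {c : PT Pu D ⊕ GrAtm Pu D} (hc : c ∈ cs) :
    ∃ l ∈ γ.body, (l.1, l.2.eval v) = childLit c :=
  List.mem_map.mp (hmap ▸ List.mem_map_of_mem hc)

variable {σ : GrAtm Pu D → W} (hσ : locStratWrt σ P) (hγ : γ ∈ P) (hcv : γ.constr v)
  (hmap : γ.body.map (fun l => (l.1, l.2.eval v)) = cs.map childLit)
include hσ hγ hcv hmap

theorem stratum_root_le_of_inl_mem {t : PT Pu D} (ht : Sum.inl t ∈ cs) :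
    σ t.root ≤ σ (γ.head.eval v) := by
  obtain ⟨l, hl, hlt⟩ := exists_mem_body_of_mem_children hmap ht
  simp only [childLit, Prod.mk.injEq] at hlt
  exact hlt.2 ▸ (hσ γ hγ v hcv l hl).1 hlt.1

theorem stratum_lt_of_inr_mem {B : GrAtm Pu D} (hB : Sum.inr B ∈ cs) :
    σ B < σ (γ.head.eval v) := by
  obtain ⟨l, hl, hlt⟩ := exists_mem_body_of_mem_children hmap hB
  simp only [childLit, Prod.mk.injEq] at hlt
  exact hlt.2 ▸ (hσ γ hγ v hcv l hl).2 hlt.1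

end GroundInstance

theorem PT.ValidW.not_mem_provableAtoms_of_root_le {P : SProg V D Pu} {σ : GrAtm Pu D → W}
    (hσ : locStratWrt σ P) {α : W} {T : PT Pu D}
    (hT : PT.ValidW P (fun B => ∀ _hlt : σ B < α, ¬ HasPTAux σ P (σ B) B) T)
    (hroot : σ T.root ≤ α) : PT.ValidW P (· ∉ provableAtoms σ P) T := by
  induction hT with
  | @node A cs hc _ hneg ih =>
    obtain ⟨γ, hγ, v, hcv, rfl, hmap⟩ := hc
    refine .node ⟨γ, hγ, v, hcv, rfl, hmap⟩ (fun t ht => ?_) (fun B hB => ?_)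
    · exact ih t ht ((stratum_root_le_of_inl_mem hσ hγ hcv hmap ht).trans hroot)
    · exact hneg B hB ((stratum_lt_of_inr_mem hσ hγ hcv hmap hB).trans_le hroot)

theorem mem_provableAtoms_iff {P : SProg V D Pu} {σ : GrAtm Pu D → W} (hσ : locStratWrt σ P)
    (A : GrAtm Pu D) : A ∈ provableAtoms σ P ↔
      ∃ T : PT Pu D, T.root = A ∧ PT.ValidW P (· ∉ provableAtoms σ P) T := by
  show HasPTAux σ P (σ A) A ↔ _
  rw [HasPTAux]
  constructor
  · rintro ⟨T, rfl, hT⟩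
    exact ⟨T, rfl, hT.not_mem_provableAtoms_of_root_le hσ le_rfl⟩
  · rintro ⟨T, hroot, hT⟩
    exact ⟨T, hroot, hT.mono fun B hB (_ : σ B < σ A) => hB⟩

theorem exists_children_of_forall_litTrue {P : SProg V D Pu} {σ : GrAtm Pu D → W}
    (hσ : locStratWrt σ P) (v : V → D) (L : List (Bool × SAtm V D Pu))
    (hL : ∀ l ∈ L, litTrue (provableAtoms σ P) (l.1, l.2.eval v)) :
    ∃ cs : List (PT Pu D ⊕ GrAtm Pu D), L.map (fun l => (l.1, l.2.eval v)) = cs.map childLit ∧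
      (∀ t, Sum.inl t ∈ cs → PT.ValidW P (· ∉ provableAtoms σ P) t) ∧
      (∀ B, Sum.inr B ∈ cs → B ∉ provableAtoms σ P) := by
  induction L with
  | nil => exact ⟨[], rfl, by simp, by simp⟩
  | cons l L ih =>
    obtain ⟨cs, hmap, hpos, hneg⟩ := ih fun x hx => hL x (List.mem_cons_of_mem _ hx)
    have hl := hL l List.mem_cons_self
    obtain ⟨b, a⟩ := l
    cases b with
    | true =>
      obtain ⟨T, hroot, hT⟩ := (mem_provableAtoms_iff hσ _).mp (by simpa [litTrue] using hl)
      refine ⟨.inl T :: cs, by simp [childLit, hroot, hmap], ?_, by simpa using hneg⟩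
      simpa [hT] using hpos
    | false =>
      refine ⟨.inr (a.eval v) :: cs, by simp [childLit, hmap], by simpa using hpos, ?_⟩
      rintro B (_ | ⟨_, hB⟩)
      · simpa [litTrue] using hl
      · exact hneg B hB

theorem provableAtoms_isModel {P : SProg V D Pu} {σ : GrAtm Pu D → W} (hσ : locStratWrt σ P) :
    isModel (provableAtoms σ P) P := by
  intro γ hγ v hcv hbody
  obtain ⟨cs, hmap, hpos, hneg⟩ := exists_children_of_forall_litTrue hσ v γ.body hbody
  exact (mem_provableAtoms_iff hσ _).mpr
    ⟨.node (γ.head.eval v) cs, rfl, .node ⟨γ, hγ, v, hcv, rfl, hmap⟩ hpos hneg⟩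

theorem PT.ValidW.exists_mem_diff_lt_of_root_not_mem {P : SProg V D Pu}
    {τ : GrAtm Pu D → W} (hτ : locStratWrt τ P) {N S : Set (GrAtm Pu D)} (hN : isModel N P)
    {T : PT Pu D} (hT : PT.ValidW P (· ∉ S) T) (hroot : T.root ∉ N) :
    ∃ B ∈ N \ S, τ B < τ T.root := by
  induction hT with
  | @node A cs hc _ hneg ih =>
    obtain ⟨γ, hγ, v, hcv, rfl, hmap⟩ := hc
    have hfalse : ∃ c ∈ cs, ¬ litTrue N (childLit c) := by
      by_contra! hall
      have hbody : ∀ l ∈ γ.body, litTrue N (l.1, l.2.eval v) := by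
        rw [← List.forall_mem_map (P := litTrue N), hmap, List.forall_mem_map]
        exact hall
      exact hroot (hN γ hγ v hcv hbody)
    obtain ⟨c | B, hc, hcN⟩ := hfalse
    · obtain ⟨B, hB, hlt⟩ := ih c hc (by simpa [litTrue, childLit] using hcN)
      exact ⟨B, hB, hlt.trans_le (stratum_root_le_of_inl_mem hτ hγ hcv hmap hc)⟩
    · have hBN : B ∈ N := by simpa [litTrue, childLit] using hcN
      exact ⟨B, ⟨hBN, hneg B hc⟩, stratum_lt_of_inr_mem hτ hγ hcv hmap hc⟩

theorem pref_provableAtoms {P : SProg V D Pu} {σ τ : GrAtm Pu D → W} (hσ : locStratWrt σ P)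
    (hτ : locStratWrt τ P) {N : Set (GrAtm Pu D)} (hN : isModel N P) :
    pref τ (provableAtoms σ P) N := by
  rintro A ⟨hA, hAN⟩
  obtain ⟨T, rfl, hT⟩ := (mem_provableAtoms_iff hσ A).mp hA
  exact hT.exists_mem_diff_lt_of_root_not_mem hτ hN hAN

theorem pref_antisymm {τ : GrAtm Pu D → W} {I J : Set (GrAtm Pu D)} (hIJ : pref τ I J)
    (hJI : pref τ J I) : I = J := by
  suffices h : ∀ A, A ∉ I \ J ∧ A ∉ J \ I by
    ext A
    simpa only [Set.mem_sdiff, not_and, not_not, ← iff_def] using h A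
  intro A
  induction A using (InvImage.wf τ wellFounded_lt).induction with
  | _ A ih =>
    refine ⟨fun hA => ?_, fun hA => ?_⟩
    · obtain ⟨B, hB, hlt⟩ := hIJ A hA
      exact (ih B hlt).2 hB
    · obtain ⟨B, hB, hlt⟩ := hJI A hA
      exact (ih B hlt).1 hB

/-- Let `P` be a locally stratified constraint logic program
(with local stratification `σ`). For every ground atom `A`, there exists a proof
tree for `A` and `P` if and only if `A ∈ M(P)`, where `M(P)` is the (unique)
perfect model of `P`. -/
theorem proof_tree_iff_in_perfect_model {V D Pu : Type} (P : SProg V D Pu)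
    (hfin : P.Finite) (σ : GrAtm Pu D → W) (hσ : locStratWrt σ P)
    (M : Set (GrAtm Pu D)) (hM : IsPerfectModel P M) (A : GrAtm Pu D) :
    HasProofTree σ P A ↔ A ∈ M := by
  obtain ⟨τ, hτ, hM, hMpref⟩ := hM
  have hprov : provableAtoms σ P = M := by
    by_contra hne
    exact hne <| pref_antisymm (pref_provableAtoms hσ hτ hM)
      (hMpref _ (provableAtoms_isModel hσ) hne)
  exact hprov ▸ Iff.rfl

end CLP
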